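/- In the polynomial ring F₀[X] with F₀ = ℚ(p, x₀, x₁, x₂, x₃) one has the identity Q(X) = 1 − A·X + p(B + (p²+1)C + (p²+1)²D)·X² − p³·A·(C+D)·X³ + p⁶(−2p·B·D + C² − 2(p−1)·C·D − (p²+2p−1)(p⁴+p²+1)·D² + A²·D)·X⁴ − p⁹·A·D·(C+D)·X⁵ + p^{13}·D²·(B + (p²+1)C + (p²+1)²D)·X⁶ − p^{18}·D³·A·X⁷ + p^{24}·D⁴·X⁸. (This is the spherical-map form of the denominator F(X) of Shimura's conjecture for Sp₃: Ω applied to F(X) with coefficients the Hecke operators T(p), T₁(p²), T₂(p²), [p]₃ yields Q(X).) -/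
import Mathlib


/-! Common setup: the field `F₀ = ℚ(p, x₀, x₁, x₂, x₃)`, realized as the fraction field of the
polynomial ring `ℚ[p, x₀, x₁, x₂, x₃]`.  `p` has index `0`, `x₀` has index `1`, and `x i`
(for `i : Fin 3`) are the variables `x₁, x₂, x₃`. -/

noncomputable section

/-- The rational function field `ℚ(p, x₀, x₁, x₂, x₃)`. -/
abbrev F₀ : Type := FractionRing (MvPolynomial (Fin 5) ℚ)

/-- The indeterminate `p`. -/
def p : F₀ := algebraMap (MvPolynomial (Fin 5) ℚ) F₀ (MvPolynomial.X 0)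

/-- The indeterminate `x₀`. -/
def x₀ : F₀ := algebraMap (MvPolynomial (Fin 5) ℚ) F₀ (MvPolynomial.X 1)

/-- The indeterminates `x₁, x₂, x₃` (as `x 0, x 1, x 2`). -/
def x (i : Fin 3) : F₀ := algebraMap (MvPolynomial (Fin 5) ℚ) F₀ (MvPolynomial.X i.succ.succ)

/-- The monomial symmetric polynomial `sym_{a,b,c}` in `x₁, x₂, x₃`: the sum of all *distinct*
monomials obtained from `x₁^a x₂^b x₃^c` by permuting the variables. -/
def sym (a b c : ℕ) : F₀ :=
  ∑ e ∈ Finset.univ.image (fun σ : Equiv.Perm (Fin 3) => (![a, b, c]) ∘ σ),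
    ∏ j, x j ^ e j

/-- Andrianov's formula for the Satake spherical image `ω(λ,μ) = ω(t(1, p^λ, p^μ))`
of the `GL₃` Hecke operator `t(1, p^λ, p^μ)`, for `0 ≤ λ ≤ μ`. -/
def ω (l m : ℕ) : F₀ :=
  ((if l = 0 ∧ m = 0 then p ^ 3 / ((p + 1) * (p ^ 2 + p + 1))
    else if l = 0 ∨ l = m then p / (p + 1)
    else 1) / p ^ (2 * l + m)) *
  ∑ σ : Equiv.Perm (Fin 3),
    x (σ 1) ^ l * x (σ 2) ^ m *
      ((x (σ 1) - x (σ 0) / p) * (x (σ 2) - x (σ 0) / p) * (x (σ 2) - x (σ 1) / p)) /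
      ((x (σ 1) - x (σ 0)) * (x (σ 2) - x (σ 0)) * (x (σ 2) - x (σ 1)))

open Polynomial in
/-- `Ω(T(p))`, the spherical image of the Hecke operator `T(p)` for `Sp₃`. -/
def A : F₀ := x₀ * (1 + sym 1 0 0 + sym 1 1 0 + sym 1 1 1)

/-- `Ω(T₁(p²))`. -/
def B : F₀ := x₀ ^ 2 * (((p ^ 2 - 1) / p ^ 3) * (sym 2 1 1 + sym 1 1 0)
  + (1 / p) * (sym 2 2 1 + sym 2 1 0 + sym 1 0 0)
  + ((p - 1) * (3 * p ^ 2 + 2 * p + 1) / p ^ 4) * sym 1 1 1)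

/-- `Ω(T₂(p²))`. -/
def Cc : F₀ := x₀ ^ 2 * ((1 / p ^ 3) * (sym 1 1 0 + sym 2 1 1)
  + ((p - 1) * (p ^ 2 + p + 1) / p ^ 6) * sym 1 1 1)

/-- `Ω([p]₃)`. -/
def Dd : F₀ := x₀ ^ 2 * sym 1 1 1 / p ^ 6

lemma sym100 : sym 1 0 0 = x 0 + x 1 + x 2 := by
  have h : (Finset.univ.image (fun σ : Equiv.Perm (Fin 3) => (![1,0,0] : Fin 3 → ℕ) ∘ σ))
      = {![1,0,0], ![0,1,0], ![0,0,1]} := by decide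
  rw [sym, h, Finset.sum_insert (by decide), Finset.sum_insert (by decide), Finset.sum_singleton]
  simp [Fin.prod_univ_three]
  try ring

lemma sym110 : sym 1 1 0 = x 0 * x 1 + x 0 * x 2 + x 1 * x 2 := by
  have h : (Finset.univ.image (fun σ : Equiv.Perm (Fin 3) => (![1,1,0] : Fin 3 → ℕ) ∘ σ))
      = {![1,1,0], ![1,0,1], ![0,1,1]} := by decide
  rw [sym, h, Finset.sum_insert (by decide), Finset.sum_insert (by decide), Finset.sum_singleton]
  simp [Fin.prod_univ_three]
  try ring

lemma sym111 : sym 1 1 1 = x 0 * x 1 * x 2 := by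
  have h : (Finset.univ.image (fun σ : Equiv.Perm (Fin 3) => (![1,1,1] : Fin 3 → ℕ) ∘ σ))
      = {![1,1,1]} := by decide
  rw [sym, h, Finset.sum_singleton]
  simp [Fin.prod_univ_three]
  try ring

lemma sym211 : sym 2 1 1 = x 0 ^ 2 * x 1 * x 2 + x 0 * x 1 ^ 2 * x 2 + x 0 * x 1 * x 2 ^ 2 := by
  have h : (Finset.univ.image (fun σ : Equiv.Perm (Fin 3) => (![2,1,1] : Fin 3 → ℕ) ∘ σ))
      = {![2,1,1], ![1,2,1], ![1,1,2]} := by decide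
  rw [sym, h, Finset.sum_insert (by decide), Finset.sum_insert (by decide), Finset.sum_singleton]
  simp [Fin.prod_univ_three]
  try ring

lemma sym221 : sym 2 2 1 = x 0 ^ 2 * x 1 ^ 2 * x 2 + x 0 ^ 2 * x 1 * x 2 ^ 2 + x 0 * x 1 ^ 2 * x 2 ^ 2 := by
  have h : (Finset.univ.image (fun σ : Equiv.Perm (Fin 3) => (![2,2,1] : Fin 3 → ℕ) ∘ σ))
      = {![2,2,1], ![2,1,2], ![1,2,2]} := by decide
  rw [sym, h, Finset.sum_insert (by decide), Finset.sum_insert (by decide), Finset.sum_singleton]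
  simp [Fin.prod_univ_three]
  try ring

lemma sym210 : sym 2 1 0 = x 0 ^ 2 * x 1 + x 0 ^ 2 * x 2 + x 0 * x 1 ^ 2 + x 0 * x 2 ^ 2 + x 1 ^ 2 * x 2 + x 1 * x 2 ^ 2 := by
  have h : (Finset.univ.image (fun σ : Equiv.Perm (Fin 3) => (![2,1,0] : Fin 3 → ℕ) ∘ σ))
      = {![2,1,0], ![2,0,1], ![1,2,0], ![1,0,2], ![0,2,1], ![0,1,2]} := by decide
  rw [sym, h, Finset.sum_insert (by decide), Finset.sum_insert (by decide), Finset.sum_insert (by decide), Finset.sum_insert (by decide), Finset.sum_insert (by decide), Finset.sum_singleton]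
  simp [Fin.prod_univ_three]
  try ring

lemma p_ne : p ≠ 0 := by
  have hinj := IsFractionRing.injective (MvPolynomial (Fin 5) ℚ) F₀
  simp only [p, ne_eq, map_eq_zero_iff _ hinj]
  exact MvPolynomial.X_ne_zero 0

set_option maxHeartbeats 4000000 in
lemma hA : A = x₀ + x₀ * x 2 + x₀ * x 1 + x₀ * x 1 * x 2 + x₀ * x 0 + x₀ * x 0 * x 2 + x₀ * x 0 * x 1 + x₀ * x 0 * x 1 * x 2 := by
  simp only [A, sym100, sym110, sym111, sym211, sym221, sym210]
  ring

set_option maxHeartbeats 4000000 in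
lemma hB : p ^ 4 * B = -x₀ ^ 2 * x 0 * x 1 * x 2 - p * x₀ ^ 2 * x 1 * x 2 - p * x₀ ^ 2 * x 0 * x 2 - p * x₀ ^ 2 * x 0 * x 1 - p * x₀ ^ 2 * x 0 * x 1 * x 2 - p * x₀ ^ 2 * x 0 * x 1 * x 2 ^ 2 - p * x₀ ^ 2 * x 0 * x 1 ^ 2 * x 2 - p * x₀ ^ 2 * x 0 ^ 2 * x 1 * x 2 - p ^ 2 * x₀ ^ 2 * x 0 * x 1 * x 2 + p ^ 3 * x₀ ^ 2 * x 2 + p ^ 3 * x₀ ^ 2 * x 1 + p ^ 3 * x₀ ^ 2 * x 1 * x 2 + p ^ 3 * x₀ ^ 2 * x 1 * x 2 ^ 2 + p ^ 3 * x₀ ^ 2 * x 1 ^ 2 * x 2 + p ^ 3 * x₀ ^ 2 * x 0 + p ^ 3 * x₀ ^ 2 * x 0 * x 2 + p ^ 3 * x₀ ^ 2 * x 0 * x 2 ^ 2 + p ^ 3 * x₀ ^ 2 * x 0 * x 1 + 3 * p ^ 3 * x₀ ^ 2 * x 0 * x 1 * x 2 + p ^ 3 * x₀ ^ 2 * x 0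 * x 1 * x 2 ^ 2 + p ^ 3 * x₀ ^ 2 * x 0 * x 1 ^ 2 + p ^ 3 * x₀ ^ 2 * x 0 * x 1 ^ 2 * x 2 + p ^ 3 * x₀ ^ 2 * x 0 * x 1 ^ 2 * x 2 ^ 2 + p ^ 3 * x₀ ^ 2 * x 0 ^ 2 * x 2 + p ^ 3 * x₀ ^ 2 * x 0 ^ 2 * x 1 + p ^ 3 * x₀ ^ 2 * x 0 ^ 2 * x 1 * x 2 + p ^ 3 * x₀ ^ 2 * x 0 ^ 2 * x 1 * x 2 ^ 2 + p ^ 3 * x₀ ^ 2 * x 0 ^ 2 * x 1 ^ 2 * x 2 := by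
  simp only [B, sym100, sym110, sym111, sym211, sym221, sym210]
  field_simp [p_ne]
  try ring

set_option maxHeartbeats 4000000 in
lemma hC : p ^ 6 * Cc = -x₀ ^ 2 * x 0 * x 1 * x 2 + p ^ 3 * x₀ ^ 2 * x 1 * x 2 + p ^ 3 * x₀ ^ 2 * x 0 * x 2 + p ^ 3 * x₀ ^ 2 * x 0 * x 1 + p ^ 3 * x₀ ^ 2 * x 0 * x 1 * x 2 + p ^ 3 * x₀ ^ 2 * x 0 * x 1 * x 2 ^ 2 + p ^ 3 * x₀ ^ 2 * x 0 * x 1 ^ 2 * x 2 + p ^ 3 * x₀ ^ 2 * x 0 ^ 2 * x 1 * x 2 := by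
  simp only [Cc, sym100, sym110, sym111, sym211, sym221, sym210]
  field_simp [p_ne]
  try ring

set_option maxHeartbeats 4000000 in
lemma hD : p ^ 6 * Dd = x₀ ^ 2 * x 0 * x 1 * x 2 := by
  simp only [Dd, sym100, sym110, sym111, sym211, sym221, sym210]
  field_simp [p_ne]
  try ring

lemma hco1 : A = x₀ + x₀ * x 2 + x₀ * x 1 + x₀ * x 1 * x 2 + x₀ * x 0 + x₀ * x 0 * x 2 + x₀ * x 0 * x 1 + x₀ * x 0 * x 1 * x 2 := hA

set_option maxHeartbeats 4000000 in
lemma hco2 : p * (B + (p ^ 2 + 1) * Cc + (p ^ 2 + 1) ^ 2 * Dd) = x₀ ^ 2 * x 2 + x₀ ^ 2 * x 1 + 2 * x₀ ^ 2 * x 1 * x 2 + x₀ ^ 2 * x 1 * x 2 ^ 2 + x₀ ^ 2 * x 1 ^ 2 * x 2 + x₀ ^ 2 * x 0 + 2 * x₀ ^ 2 * x 0 * x 2 + x₀ ^ 2 * x 0 * x 2 ^ 2 + 2 * x₀ ^ 2 * x 0 * x 1 + 4 * x₀ ^ 2 * x 0 * x 1 * x 2 + 2 * x₀ ^ 2 *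 x 0 * x 1 * x 2 ^ 2 + x₀ ^ 2 * x 0 * x 1 ^ 2 + 2 * x₀ ^ 2 * x 0 * x 1 ^ 2 * x 2 + x₀ ^ 2 * x 0 * x 1 ^ 2 * x 2 ^ 2 + x₀ ^ 2 * x 0 ^ 2 * x 2 + x₀ ^ 2 * x 0 ^ 2 * x 1 + 2 * x₀ ^ 2 * x 0 ^ 2 * x 1 * x 2 + x₀ ^ 2 * x 0 ^ 2 * x 1 * x 2 ^ 2 + x₀ ^ 2 * x 0 ^ 2 * x 1 ^ 2 * x 2 := by
  have h : p ^ 5 * (p * (B + (p ^ 2 + 1) * Cc + (p ^ 2 + 1) ^ 2 * Dd)) = p ^ 5 * (x₀ ^ 2 * x 2 + x₀ ^ 2 * x 1 + 2 * x₀ ^ 2 * x 1 * x 2 + x₀ ^ 2 * x 1 * x 2 ^ 2 + x₀ ^ 2 * x 1 ^ 2 * x 2 + x₀ ^ 2 * x 0 + 2 * x₀ ^ 2 * x 0 * x 2 + x₀ ^ 2 * x 0 * x 2 ^ 2 + 2 * x₀ ^ 2 * x 0 * x 1 + 4 * x₀ ^ 2 * x 0 * x 1 * x 2 + 2 * x₀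 ^ 2 * x 0 * x 1 * x 2 ^ 2 + x₀ ^ 2 * x 0 * x 1 ^ 2 + 2 * x₀ ^ 2 * x 0 * x 1 ^ 2 * x 2 + x₀ ^ 2 * x 0 * x 1 ^ 2 * x 2 ^ 2 + x₀ ^ 2 * x 0 ^ 2 * x 2 + x₀ ^ 2 * x 0 ^ 2 * x 1 + 2 * x₀ ^ 2 * x 0 ^ 2 * x 1 * x 2 + x₀ ^ 2 * x 0 ^ 2 * x 1 * x 2 ^ 2 + x₀ ^ 2 * x 0 ^ 2 * x 1 ^ 2 * x 2) := by
    linear_combination (p ^ 2) * hB + (1 + p ^ 2) * hC + (1 + 2 * p ^ 2 + p ^ 4) * hD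
  exact mul_left_cancel₀ (pow_ne_zero 5 p_ne) h

set_option maxHeartbeats 4000000 in
lemma hco3 : p ^ 3 * A * (Cc + Dd) = x₀ ^ 3 * x 1 * x 2 + x₀ ^ 3 * x 1 * x 2 ^ 2 + x₀ ^ 3 * x 1 ^ 2 * x 2 + x₀ ^ 3 * x 1 ^ 2 * x 2 ^ 2 + x₀ ^ 3 * x 0 * x 2 + x₀ ^ 3 * x 0 * x 2 ^ 2 + x₀ ^ 3 * x 0 * x 1 + 4 * x₀ ^ 3 * x 0 * x 1 * x 2 + 4 * x₀ ^ 3 * x 0 * x 1 * x 2 ^ 2 + x₀ ^ 3 * x 0 * x 1 * x 2 ^ 3 + x₀ ^ 3 * x 0 * x 1 ^ 2 + 4 * x₀ ^ 3 * x 0 * x 1 ^ 2 * x 2 + 4 * x₀ ^ 3 * x 0 * x 1 ^ 2 * x 2 ^ 2 + x₀ ^ 3 * x 0 * x 1 ^ 2 * x 2 ^ 3 + x₀ ^ 3 * x 0 * x 1 ^ 3 * x 2 + x₀ ^ 3 * x 0 * x 1 ^ 3 * x 2 ^ 2 + x₀ ^ 3 * x 0 ^ 2 * x 2 + x₀ ^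 3 * x 0 ^ 2 * x 2 ^ 2 + x₀ ^ 3 * x 0 ^ 2 * x 1 + 4 * x₀ ^ 3 * x 0 ^ 2 * x 1 * x 2 + 4 * x₀ ^ 3 * x 0 ^ 2 * x 1 * x 2 ^ 2 + x₀ ^ 3 * x 0 ^ 2 * x 1 * x 2 ^ 3 + x₀ ^ 3 * x 0 ^ 2 * x 1 ^ 2 + 4 * x₀ ^ 3 * x 0 ^ 2 * x 1 ^ 2 * x 2 + 4 * x₀ ^ 3 * x 0 ^ 2 * x 1 ^ 2 * x 2 ^ 2 + x₀ ^ 3 * x 0 ^ 2 * x 1 ^ 2 * x 2 ^ 3 + x₀ ^ 3 * x 0 ^ 2 * x 1 ^ 3 * x 2 + x₀ ^ 3 * x 0 ^ 2 * x 1 ^ 3 * x 2 ^ 2 + x₀ ^ 3 * x 0 ^ 3 * x 1 * x 2 + x₀ ^ 3 * x 0 ^ 3 * x 1 * x 2 ^ 2 + x₀ ^ 3 * x 0 ^ 3 * x 1 ^ 2 * x 2 + x₀ ^ 3 * x 0 ^ 3 * x 1 ^ 2 * x 2 ^ 2 := by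
  have h : p ^ 3 * (p ^ 3 * A * (Cc + Dd)) = p ^ 3 * (x₀ ^ 3 * x 1 * x 2 + x₀ ^ 3 * x 1 * x 2 ^ 2 + x₀ ^ 3 * x 1 ^ 2 * x 2 + x₀ ^ 3 * x 1 ^ 2 * x 2 ^ 2 + x₀ ^ 3 * x 0 * x 2 + x₀ ^ 3 * x 0 * x 2 ^ 2 + x₀ ^ 3 * x 0 * x 1 + 4 * x₀ ^ 3 * x 0 * x 1 * x 2 + 4 * x₀ ^ 3 * x 0 * x 1 * x 2 ^ 2 + x₀ ^ 3 * x 0 * x 1 * x 2 ^ 3 + x₀ ^ 3 * x 0 * x 1 ^ 2 + 4 * x₀ ^ 3 * x 0 * x 1 ^ 2 * x 2 + 4 * x₀ ^ 3 * x 0 * x 1 ^ 2 * x 2 ^ 2 + x₀ ^ 3 * x 0 * x 1 ^ 2 * x 2 ^ 3 + x₀ ^ 3 * x 0 * x 1 ^ 3 * x 2 + x₀ ^ 3 * x 0 * x 1 ^ 3 * x 2 ^ 2 + x₀ ^ 3 * x 0 ^ 2 * x 2 + x₀ ^ 3 * x 0 ^ 2 * x 2 ^ 2 + x₀ ^ 3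 * x 0 ^ 2 * x 1 + 4 * x₀ ^ 3 * x 0 ^ 2 * x 1 * x 2 + 4 * x₀ ^ 3 * x 0 ^ 2 * x 1 * x 2 ^ 2 + x₀ ^ 3 * x 0 ^ 2 * x 1 * x 2 ^ 3 + x₀ ^ 3 * x 0 ^ 2 * x 1 ^ 2 + 4 * x₀ ^ 3 * x 0 ^ 2 * x 1 ^ 2 * x 2 + 4 * x₀ ^ 3 * x 0 ^ 2 * x 1 ^ 2 * x 2 ^ 2 + x₀ ^ 3 * x 0 ^ 2 * x 1 ^ 2 * x 2 ^ 3 + x₀ ^ 3 * x 0 ^ 2 * x 1 ^ 3 * x 2 + x₀ ^ 3 * x 0 ^ 2 * x 1 ^ 3 * x 2 ^ 2 + x₀ ^ 3 * x 0 ^ 3 * x 1 * x 2 + x₀ ^ 3 * x 0 ^ 3 * x 1 * x 2 ^ 2 + x₀ ^ 3 * x 0 ^ 3 * x 1 ^ 2 * x 2 + x₀ ^ 3 * x 0 ^ 3 * x 1 ^ 2 * x 2 ^ 2) := by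
    linear_combination (p ^ 6 * Dd + p ^ 6 * Cc) * hA + (x₀ + x₀ * x 2 + x₀ * x 1 + x₀ * x 1 * x 2 + x₀ * x 0 + x₀ * x 0 * x 2 + x₀ * x 0 * x 1 + x₀ * x 0 * x 1 * x 2) * hC + (x₀ + x₀ * x 2 + x₀ * x 1 + x₀ * x 1 * x 2 + x₀ * x 0 + x₀ * x 0 * x 2 + x₀ * x 0 * x 1 + x₀ * x 0 * x 1 * x 2) * hD
  exact mul_left_cancel₀ (pow_ne_zero 3 p_ne) h

set_option maxHeartbeats 4000000 in
lemma hco4 : p ^ 6 * (-(2 * p * B * Dd) + Cc ^ 2 - 2 * (p - 1) * Cc * Dd - (p ^ 2 + 2 * p - 1) * (p ^ 4 + p ^ 2 + 1) * Dd ^ 2 + A ^ 2 * Dd) = x₀ ^ 4 * x 1 ^ 2 * x 2 ^ 2 + x₀ ^ 4 * x 0 * x 1 * x 2 + 2 * x₀ ^ 4 * x 0 * x 1 * x 2 ^ 2 + x₀ ^ 4 * x 0 * x 1 * x 2 ^ 3 + 2 * x₀ ^ 4 * x 0 * x 1 ^ 2 * x 2 + 4 * x₀ ^ 4 * x 0 *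 x 1 ^ 2 * x 2 ^ 2 + 2 * x₀ ^ 4 * x 0 * x 1 ^ 2 * x 2 ^ 3 + x₀ ^ 4 * x 0 * x 1 ^ 3 * x 2 + 2 * x₀ ^ 4 * x 0 * x 1 ^ 3 * x 2 ^ 2 + x₀ ^ 4 * x 0 * x 1 ^ 3 * x 2 ^ 3 + x₀ ^ 4 * x 0 ^ 2 * x 2 ^ 2 + 2 * x₀ ^ 4 * x 0 ^ 2 * x 1 * x 2 + 4 * x₀ ^ 4 * x 0 ^ 2 * x 1 * x 2 ^ 2 + 2 * x₀ ^ 4 * x 0 ^ 2 * x 1 * x 2 ^ 3 + x₀ ^ 4 * x 0 ^ 2 * x 1 ^ 2 + 4 * x₀ ^ 4 * x 0 ^ 2 * x 1 ^ 2 * x 2 + 8 * x₀ ^ 4 * x 0 ^ 2 * x 1 ^ 2 * x 2 ^ 2 + 4 * x₀ ^ 4 * x 0 ^ 2 * x 1 ^ 2 * x 2 ^ 3 + x₀ ^ 4 * x 0 ^ 2 * x 1 ^ 2 * x 2 ^ 4 + 2 * x₀ ^ 4 * x 0 ^ 2 * x 1 ^ 3 * x 2 + 4 * x₀ ^ 4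 * x 0 ^ 2 * x 1 ^ 3 * x 2 ^ 2 + 2 * x₀ ^ 4 * x 0 ^ 2 * x 1 ^ 3 * x 2 ^ 3 + x₀ ^ 4 * x 0 ^ 2 * x 1 ^ 4 * x 2 ^ 2 + x₀ ^ 4 * x 0 ^ 3 * x 1 * x 2 + 2 * x₀ ^ 4 * x 0 ^ 3 * x 1 * x 2 ^ 2 + x₀ ^ 4 * x 0 ^ 3 * x 1 * x 2 ^ 3 + 2 * x₀ ^ 4 * x 0 ^ 3 * x 1 ^ 2 * x 2 + 4 * x₀ ^ 4 * x 0 ^ 3 * x 1 ^ 2 * x 2 ^ 2 + 2 * x₀ ^ 4 * x 0 ^ 3 * x 1 ^ 2 * x 2 ^ 3 + x₀ ^ 4 * x 0 ^ 3 * x 1 ^ 3 * x 2 + 2 * x₀ ^ 4 * x 0 ^ 3 * x 1 ^ 3 * x 2 ^ 2 + x₀ ^ 4 * x 0 ^ 3 * x 1 ^ 3 * x 2 ^ 3 + x₀ ^ 4 * x 0 ^ 4 * x 1 ^ 2 * x 2 ^ 2 := by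
  have h : p ^ 6 * (p ^ 6 * (-(2 * p * B * Dd) + Cc ^ 2 - 2 * (p - 1) * Cc * Dd - (p ^ 2 + 2 * p - 1) * (p ^ 4 + p ^ 2 + 1) * Dd ^ 2 + A ^ 2 * Dd)) = p ^ 6 * (x₀ ^ 4 * x 1 ^ 2 * x 2 ^ 2 + x₀ ^ 4 * x 0 * x 1 * x 2 + 2 * x₀ ^ 4 * x 0 * x 1 * x 2 ^ 2 + x₀ ^ 4 * x 0 * x 1 * x 2 ^ 3 + 2 * x₀ ^ 4 * x 0 * x 1 ^ 2 * x 2 + 4 * x₀ ^ 4 * x 0 * x 1 ^ 2 * x 2 ^ 2 + 2 * x₀ ^ 4 * x 0 * x 1 ^ 2 * x 2 ^ 3 + x₀ ^ 4 * x 0 * x 1 ^ 3 * x 2 + 2 * x₀ ^ 4 * x 0 * x 1 ^ 3 * x 2 ^ 2 + x₀ ^ 4 * x 0 * x 1 ^ 3 * x 2 ^ 3 + x₀ ^ 4 * x 0 ^ 2 * x 2 ^ 2 + 2 * x₀ ^ 4 * x 0 ^ 2 * x 1 * x 2 + 4 * x₀ ^ 4 * x 0 ^ 2 * x 1 * x 2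 ^ 2 + 2 * x₀ ^ 4 * x 0 ^ 2 * x 1 * x 2 ^ 3 + x₀ ^ 4 * x 0 ^ 2 * x 1 ^ 2 + 4 * x₀ ^ 4 * x 0 ^ 2 * x 1 ^ 2 * x 2 + 8 * x₀ ^ 4 * x 0 ^ 2 * x 1 ^ 2 * x 2 ^ 2 + 4 * x₀ ^ 4 * x 0 ^ 2 * x 1 ^ 2 * x 2 ^ 3 + x₀ ^ 4 * x 0 ^ 2 * x 1 ^ 2 * x 2 ^ 4 + 2 * x₀ ^ 4 * x 0 ^ 2 * x 1 ^ 3 * x 2 + 4 * x₀ ^ 4 * x 0 ^ 2 * x 1 ^ 3 * x 2 ^ 2 + 2 * x₀ ^ 4 * x 0 ^ 2 * x 1 ^ 3 * x 2 ^ 3 + x₀ ^ 4 * x 0 ^ 2 * x 1 ^ 4 * x 2 ^ 2 + x₀ ^ 4 * x 0 ^ 3 * x 1 * x 2 + 2 * x₀ ^ 4 * x 0 ^ 3 * x 1 * x 2 ^ 2 + x₀ ^ 4 * x 0 ^ 3 * x 1 * x 2 ^ 3 + 2 * x₀ ^ 4 * x 0 ^ 3 * x 1 ^ 2 * x 2 +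 4 * x₀ ^ 4 * x 0 ^ 3 * x 1 ^ 2 * x 2 ^ 2 + 2 * x₀ ^ 4 * x 0 ^ 3 * x 1 ^ 2 * x 2 ^ 3 + x₀ ^ 4 * x 0 ^ 3 * x 1 ^ 3 * x 2 + 2 * x₀ ^ 4 * x 0 ^ 3 * x 1 ^ 3 * x 2 ^ 2 + x₀ ^ 4 * x 0 ^ 3 * x 1 ^ 3 * x 2 ^ 3 + x₀ ^ 4 * x 0 ^ 4 * x 1 ^ 2 * x 2 ^ 2) := by
    linear_combination (p ^ 6 * x₀ ^ 3 * x 0 * x 1 * x 2 + p ^ 6 * x₀ ^ 3 * x 0 * x 1 * x 2 ^ 2 + p ^ 6 * x₀ ^ 3 * x 0 * x 1 ^ 2 * x 2 + p ^ 6 * x₀ ^ 3 * x 0 * x 1 ^ 2 * x 2 ^ 2 + p ^ 6 * x₀ ^ 3 * x 0 ^ 2 * x 1 * x 2 + p ^ 6 * x₀ ^ 3 * x 0 ^ 2 * x 1 * x 2 ^ 2 + p ^ 6 * x₀ ^ 3 * x 0 ^ 2 * x 1 ^ 2 * x 2 + p ^ 6 * x₀ ^ 3 * x 0 ^ 2 *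 x 1 ^ 2 * x 2 ^ 2 + p ^ 12 * A * Dd) * hA + (-2 * p ^ 9 * Dd) * hB + (-x₀ ^ 2 * x 0 * x 1 * x 2 + p ^ 3 * x₀ ^ 2 * x 1 * x 2 + p ^ 3 * x₀ ^ 2 * x 0 * x 2 + p ^ 3 * x₀ ^ 2 * x 0 * x 1 + p ^ 3 * x₀ ^ 2 * x 0 * x 1 * x 2 + p ^ 3 * x₀ ^ 2 * x 0 * x 1 * x 2 ^ 2 + p ^ 3 * x₀ ^ 2 * x 0 * x 1 ^ 2 * x 2 + p ^ 3 * x₀ ^ 2 * x 0 ^ 2 * x 1 * x 2 + 2 * p ^ 6 * Dd + p ^ 6 * Cc - 2 * p ^ 7 * Dd) * hC + (-x₀ ^ 2 * x 0 * x 1 * x 2 + 2 * p ^ 3 * x₀ ^ 2 * x 1 * x 2 + 2 * p ^ 3 * x₀ ^ 2 * x 0 * x 2 + 2 * p ^ 3 * x₀ ^ 2 * x 0 * x 1 + 2 * p ^ 3 * x₀ ^ 2 * x 0 * x 1 * x 2 + 2 * p ^ 3 * x₀ ^ 2 * x 0 * x 1 * x 2 ^ 2 + 2 * p ^ 3 *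 x₀ ^ 2 * x 0 * x 1 ^ 2 * x 2 + 2 * p ^ 3 * x₀ ^ 2 * x 0 ^ 2 * x 1 * x 2 + p ^ 6 * Dd + p ^ 6 * x₀ * A + p ^ 6 * x₀ * x 2 * A + p ^ 6 * x₀ * x 1 * A + p ^ 6 * x₀ * x 1 * x 2 * A + p ^ 6 * x₀ * x 0 * A + p ^ 6 * x₀ * x 0 * x 2 * A + p ^ 6 * x₀ * x 0 * x 1 * A + p ^ 6 * x₀ * x 0 * x 1 * x 2 * A - 2 * p ^ 6 * x₀ ^ 2 * x 2 - 2 * p ^ 6 * x₀ ^ 2 * x 1 - 2 * p ^ 6 * x₀ ^ 2 * x 1 * x 2 - 2 * p ^ 6 * x₀ ^ 2 * x 1 * x 2 ^ 2 - 2 * p ^ 6 * x₀ ^ 2 * x 1 ^ 2 * x 2 - 2 * p ^ 6 * x₀ ^ 2 * x 0 - 2 * p ^ 6 * x₀ ^ 2 * x 0 * x 2 - 2 * p ^ 6 * x₀ ^ 2 * x 0 * x 2 ^ 2 - 2 * p ^ 6 * x₀ ^ 2 * x 0 * x 1 - 7 * p ^ 6 * x₀ ^ 2 * x 0 * x 1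 * x 2 - 2 * p ^ 6 * x₀ ^ 2 * x 0 * x 1 * x 2 ^ 2 - 2 * p ^ 6 * x₀ ^ 2 * x 0 * x 1 ^ 2 - 2 * p ^ 6 * x₀ ^ 2 * x 0 * x 1 ^ 2 * x 2 - 2 * p ^ 6 * x₀ ^ 2 * x 0 * x 1 ^ 2 * x 2 ^ 2 - 2 * p ^ 6 * x₀ ^ 2 * x 0 ^ 2 * x 2 - 2 * p ^ 6 * x₀ ^ 2 * x 0 ^ 2 * x 1 - 2 * p ^ 6 * x₀ ^ 2 * x 0 ^ 2 * x 1 * x 2 - 2 * p ^ 6 * x₀ ^ 2 * x 0 ^ 2 * x 1 * x 2 ^ 2 - 2 * p ^ 6 * x₀ ^ 2 * x 0 ^ 2 * x 1 ^ 2 * x 2 - 2 * p ^ 7 * Dd - 2 * p ^ 9 * Dd - 2 * p ^ 11 * Dd - p ^ 12 * Dd) * hD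
  exact mul_left_cancel₀ (pow_ne_zero 6 p_ne) h

set_option maxHeartbeats 4000000 in
lemma hco5 : p ^ 9 * A * Dd * (Cc + Dd) = x₀ ^ 5 * x 0 * x 1 ^ 2 * x 2 ^ 2 + x₀ ^ 5 * x 0 * x 1 ^ 2 * x 2 ^ 3 + x₀ ^ 5 * x 0 * x 1 ^ 3 * x 2 ^ 2 + x₀ ^ 5 * x 0 * x 1 ^ 3 * x 2 ^ 3 + x₀ ^ 5 * x 0 ^ 2 * x 1 * x 2 ^ 2 + x₀ ^ 5 * x 0 ^ 2 * x 1 * x 2 ^ 3 + x₀ ^ 5 * x 0 ^ 2 * x 1 ^ 2 * x 2 + 4 * x₀ ^ 5 * x 0 ^ 2 * x 1 ^ 2 * x 2 ^ 2 + 4 * x₀ ^ 5 * x 0 ^ 2 * x 1 ^ 2 * x 2 ^ 3 + x₀ ^ 5 * x 0 ^ 2 * x 1 ^ 2 * x 2 ^ 4 + x₀ ^ 5 * x 0 ^ 2 * x 1 ^ 3 * x 2 + 4 * x₀ ^ 5 * x 0 ^ 2 * x 1 ^ 3 * x 2 ^ 2 + 4 * x₀ ^ 5 * x 0 ^ 2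 * x 1 ^ 3 * x 2 ^ 3 + x₀ ^ 5 * x 0 ^ 2 * x 1 ^ 3 * x 2 ^ 4 + x₀ ^ 5 * x 0 ^ 2 * x 1 ^ 4 * x 2 ^ 2 + x₀ ^ 5 * x 0 ^ 2 * x 1 ^ 4 * x 2 ^ 3 + x₀ ^ 5 * x 0 ^ 3 * x 1 * x 2 ^ 2 + x₀ ^ 5 * x 0 ^ 3 * x 1 * x 2 ^ 3 + x₀ ^ 5 * x 0 ^ 3 * x 1 ^ 2 * x 2 + 4 * x₀ ^ 5 * x 0 ^ 3 * x 1 ^ 2 * x 2 ^ 2 + 4 * x₀ ^ 5 * x 0 ^ 3 * x 1 ^ 2 * x 2 ^ 3 + x₀ ^ 5 * x 0 ^ 3 * x 1 ^ 2 * x 2 ^ 4 + x₀ ^ 5 * x 0 ^ 3 * x 1 ^ 3 * x 2 + 4 * x₀ ^ 5 * x 0 ^ 3 * x 1 ^ 3 * x 2 ^ 2 + 4 * x₀ ^ 5 * x 0 ^ 3 * x 1 ^ 3 * x 2 ^ 3 + x₀ ^ 5 * x 0 ^ 3 * x 1 ^ 3 * x 2 ^ 4 + x₀ ^ 5 * x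 0 ^ 3 * x 1 ^ 4 * x 2 ^ 2 + x₀ ^ 5 * x 0 ^ 3 * x 1 ^ 4 * x 2 ^ 3 + x₀ ^ 5 * x 0 ^ 4 * x 1 ^ 2 * x 2 ^ 2 + x₀ ^ 5 * x 0 ^ 4 * x 1 ^ 2 * x 2 ^ 3 + x₀ ^ 5 * x 0 ^ 4 * x 1 ^ 3 * x 2 ^ 2 + x₀ ^ 5 * x 0 ^ 4 * x 1 ^ 3 * x 2 ^ 3 := by
  have h : p ^ 3 * (p ^ 9 * A * Dd * (Cc + Dd)) = p ^ 3 * (x₀ ^ 5 * x 0 * x 1 ^ 2 * x 2 ^ 2 + x₀ ^ 5 * x 0 * x 1 ^ 2 * x 2 ^ 3 + x₀ ^ 5 * x 0 * x 1 ^ 3 * x 2 ^ 2 + x₀ ^ 5 * x 0 * x 1 ^ 3 * x 2 ^ 3 + x₀ ^ 5 * x 0 ^ 2 * x 1 * x 2 ^ 2 + x₀ ^ 5 * x 0 ^ 2 * x 1 * x 2 ^ 3 + x₀ ^ 5 * x 0 ^ 2 * x 1 ^ 2 * x 2 + 4 * x₀ ^ 5 * x 0 ^ 2 * x 1 ^ 2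 * x 2 ^ 2 + 4 * x₀ ^ 5 * x 0 ^ 2 * x 1 ^ 2 * x 2 ^ 3 + x₀ ^ 5 * x 0 ^ 2 * x 1 ^ 2 * x 2 ^ 4 + x₀ ^ 5 * x 0 ^ 2 * x 1 ^ 3 * x 2 + 4 * x₀ ^ 5 * x 0 ^ 2 * x 1 ^ 3 * x 2 ^ 2 + 4 * x₀ ^ 5 * x 0 ^ 2 * x 1 ^ 3 * x 2 ^ 3 + x₀ ^ 5 * x 0 ^ 2 * x 1 ^ 3 * x 2 ^ 4 + x₀ ^ 5 * x 0 ^ 2 * x 1 ^ 4 * x 2 ^ 2 + x₀ ^ 5 * x 0 ^ 2 * x 1 ^ 4 * x 2 ^ 3 + x₀ ^ 5 * x 0 ^ 3 * x 1 * x 2 ^ 2 + x₀ ^ 5 * x 0 ^ 3 * x 1 * x 2 ^ 3 + x₀ ^ 5 * x 0 ^ 3 * x 1 ^ 2 * x 2 + 4 * x₀ ^ 5 * x 0 ^ 3 * x 1 ^ 2 * x 2 ^ 2 + 4 * x₀ ^ 5 * x 0 ^ 3 * x 1 ^ 2 * x 2 ^ 3 + x₀ ^ 5 * x 0 ^ 3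 * x 1 ^ 2 * x 2 ^ 4 + x₀ ^ 5 * x 0 ^ 3 * x 1 ^ 3 * x 2 + 4 * x₀ ^ 5 * x 0 ^ 3 * x 1 ^ 3 * x 2 ^ 2 + 4 * x₀ ^ 5 * x 0 ^ 3 * x 1 ^ 3 * x 2 ^ 3 + x₀ ^ 5 * x 0 ^ 3 * x 1 ^ 3 * x 2 ^ 4 + x₀ ^ 5 * x 0 ^ 3 * x 1 ^ 4 * x 2 ^ 2 + x₀ ^ 5 * x 0 ^ 3 * x 1 ^ 4 * x 2 ^ 3 + x₀ ^ 5 * x 0 ^ 4 * x 1 ^ 2 * x 2 ^ 2 + x₀ ^ 5 * x 0 ^ 4 * x 1 ^ 2 * x 2 ^ 3 + x₀ ^ 5 * x 0 ^ 4 * x 1 ^ 3 * x 2 ^ 2 + x₀ ^ 5 * x 0 ^ 4 * x 1 ^ 3 * x 2 ^ 3) := by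
    linear_combination (p ^ 12 * Dd ^ 2 + p ^ 12 * Cc * Dd) * hA + (p ^ 6 * x₀ * Dd + p ^ 6 * x₀ * x 2 * Dd + p ^ 6 * x₀ * x 1 * Dd + p ^ 6 * x₀ * x 1 * x 2 * Dd + p ^ 6 * x₀ * x 0 * Dd + p ^ 6 * x₀ * x 0 * x 2 * Dd + p ^ 6 * x₀ * x 0 * x 1 * Dd + p ^ 6 * x₀ * x 0 * x 1 * x 2 * Dd) * hC + (p ^ 3 * x₀ ^ 3 * x 1 * x 2 + p ^ 3 * x₀ ^ 3 * x 1 * x 2 ^ 2 + p ^ 3 * x₀ ^ 3 * x 1 ^ 2 * x 2 + p ^ 3 * x₀ ^ 3 * x 1 ^ 2 * x 2 ^ 2 + p ^ 3 * x₀ ^ 3 * x 0 * x 2 + p ^ 3 * x₀ ^ 3 * x 0 * x 2 ^ 2 + p ^ 3 * x₀ ^ 3 * x 0 * x 1 + 4 * p ^ 3 * x₀ ^ 3 * x 0 * x 1 * x 2 + 4 * p ^ 3 * x₀ ^ 3 * x 0 * x 1 * x 2 ^ 2 + p ^ 3 * x₀ ^ 3 * x 0 * x 1 * x 2 ^ 3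 + p ^ 3 * x₀ ^ 3 * x 0 * x 1 ^ 2 + 4 * p ^ 3 * x₀ ^ 3 * x 0 * x 1 ^ 2 * x 2 + 4 * p ^ 3 * x₀ ^ 3 * x 0 * x 1 ^ 2 * x 2 ^ 2 + p ^ 3 * x₀ ^ 3 * x 0 * x 1 ^ 2 * x 2 ^ 3 + p ^ 3 * x₀ ^ 3 * x 0 * x 1 ^ 3 * x 2 + p ^ 3 * x₀ ^ 3 * x 0 * x 1 ^ 3 * x 2 ^ 2 + p ^ 3 * x₀ ^ 3 * x 0 ^ 2 * x 2 + p ^ 3 * x₀ ^ 3 * x 0 ^ 2 * x 2 ^ 2 + p ^ 3 * x₀ ^ 3 * x 0 ^ 2 * x 1 + 4 * p ^ 3 * x₀ ^ 3 * x 0 ^ 2 * x 1 * x 2 + 4 * p ^ 3 * x₀ ^ 3 * x 0 ^ 2 * x 1 * x 2 ^ 2 + p ^ 3 * x₀ ^ 3 * x 0 ^ 2 * x 1 * x 2 ^ 3 + p ^ 3 * x₀ ^ 3 * x 0 ^ 2 * x 1 ^ 2 + 4 * p ^ 3 * x₀ ^ 3 * x 0 ^ 2 * x 1 ^ 2 *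 x 2 + 4 * p ^ 3 * x₀ ^ 3 * x 0 ^ 2 * x 1 ^ 2 * x 2 ^ 2 + p ^ 3 * x₀ ^ 3 * x 0 ^ 2 * x 1 ^ 2 * x 2 ^ 3 + p ^ 3 * x₀ ^ 3 * x 0 ^ 2 * x 1 ^ 3 * x 2 + p ^ 3 * x₀ ^ 3 * x 0 ^ 2 * x 1 ^ 3 * x 2 ^ 2 + p ^ 3 * x₀ ^ 3 * x 0 ^ 3 * x 1 * x 2 + p ^ 3 * x₀ ^ 3 * x 0 ^ 3 * x 1 * x 2 ^ 2 + p ^ 3 * x₀ ^ 3 * x 0 ^ 3 * x 1 ^ 2 * x 2 + p ^ 3 * x₀ ^ 3 * x 0 ^ 3 * x 1 ^ 2 * x 2 ^ 2 + p ^ 6 * x₀ * Dd + p ^ 6 * x₀ * x 2 * Dd + p ^ 6 * x₀ * x 1 * Dd + p ^ 6 * x₀ * x 1 * x 2 * Dd + p ^ 6 * x₀ * x 0 * Dd + p ^ 6 * x₀ * x 0 * x 2 * Dd + p ^ 6 * x₀ * x 0 * x 1 * Dd + p ^ 6 * x₀ * x 0 * x 1 * x 2 * Dd) * hD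
  exact mul_left_cancel₀ (pow_ne_zero 3 p_ne) h

set_option maxHeartbeats 4000000 in
lemma hco6 : p ^ 13 * Dd ^ 2 * (B + (p ^ 2 + 1) * Cc + (p ^ 2 + 1) ^ 2 * Dd) = x₀ ^ 6 * x 0 ^ 2 * x 1 ^ 2 * x 2 ^ 3 + x₀ ^ 6 * x 0 ^ 2 * x 1 ^ 3 * x 2 ^ 2 + 2 * x₀ ^ 6 * x 0 ^ 2 * x 1 ^ 3 * x 2 ^ 3 + x₀ ^ 6 * x 0 ^ 2 * x 1 ^ 3 * x 2 ^ 4 + x₀ ^ 6 * x 0 ^ 2 * x 1 ^ 4 * x 2 ^ 3 + x₀ ^ 6 * x 0 ^ 3 * x 1 ^ 2 * x 2 ^ 2 + 2 * x₀ ^ 6 * x 0 ^ 3 * x 1 ^ 2 * x 2 ^ 3 + x₀ ^ 6 * x 0 ^ 3 * x 1 ^ 2 * x 2 ^ 4 + 2 * x₀ ^ 6 * x 0 ^ 3 * x 1 ^ 3 * x 2 ^ 2 + 4 * x₀ ^ 6 * x 0 ^ 3 * x 1 ^ 3 * x 2 ^ 3 + 2 * x₀ ^ 6 * x 0 ^ 3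 * x 1 ^ 3 * x 2 ^ 4 + x₀ ^ 6 * x 0 ^ 3 * x 1 ^ 4 * x 2 ^ 2 + 2 * x₀ ^ 6 * x 0 ^ 3 * x 1 ^ 4 * x 2 ^ 3 + x₀ ^ 6 * x 0 ^ 3 * x 1 ^ 4 * x 2 ^ 4 + x₀ ^ 6 * x 0 ^ 4 * x 1 ^ 2 * x 2 ^ 3 + x₀ ^ 6 * x 0 ^ 4 * x 1 ^ 3 * x 2 ^ 2 + 2 * x₀ ^ 6 * x 0 ^ 4 * x 1 ^ 3 * x 2 ^ 3 + x₀ ^ 6 * x 0 ^ 4 * x 1 ^ 3 * x 2 ^ 4 + x₀ ^ 6 * x 0 ^ 4 * x 1 ^ 4 * x 2 ^ 3 := by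
  have h : p ^ 5 * (p ^ 13 * Dd ^ 2 * (B + (p ^ 2 + 1) * Cc + (p ^ 2 + 1) ^ 2 * Dd)) = p ^ 5 * (x₀ ^ 6 * x 0 ^ 2 * x 1 ^ 2 * x 2 ^ 3 + x₀ ^ 6 * x 0 ^ 2 * x 1 ^ 3 * x 2 ^ 2 + 2 * x₀ ^ 6 * x 0 ^ 2 * x 1 ^ 3 * x 2 ^ 3 + x₀ ^ 6 * x 0 ^ 2 * x 1 ^ 3 * x 2 ^ 4 + x₀ ^ 6 * x 0 ^ 2 * x 1 ^ 4 * x 2 ^ 3 + x₀ ^ 6 * x 0 ^ 3 * x 1 ^ 2 * x 2 ^ 2 + 2 * x₀ ^ 6 * x 0 ^ 3 * x 1 ^ 2 * x 2 ^ 3 + x₀ ^ 6 * x 0 ^ 3 * x 1 ^ 2 * x 2 ^ 4 + 2 * x₀ ^ 6 * x 0 ^ 3 * x 1 ^ 3 * x 2 ^ 2 + 4 * x₀ ^ 6 * x 0 ^ 3 * x 1 ^ 3 * x 2 ^ 3 + 2 * x₀ ^ 6 * x 0 ^ 3 * x 1 ^ 3 * x 2 ^ 4 + x₀ ^ 6 *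 x 0 ^ 3 * x 1 ^ 4 * x 2 ^ 2 + 2 * x₀ ^ 6 * x 0 ^ 3 * x 1 ^ 4 * x 2 ^ 3 + x₀ ^ 6 * x 0 ^ 3 * x 1 ^ 4 * x 2 ^ 4 + x₀ ^ 6 * x 0 ^ 4 * x 1 ^ 2 * x 2 ^ 3 + x₀ ^ 6 * x 0 ^ 4 * x 1 ^ 3 * x 2 ^ 2 + 2 * x₀ ^ 6 * x 0 ^ 4 * x 1 ^ 3 * x 2 ^ 3 + x₀ ^ 6 * x 0 ^ 4 * x 1 ^ 3 * x 2 ^ 4 + x₀ ^ 6 * x 0 ^ 4 * x 1 ^ 4 * x 2 ^ 3) := by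
    linear_combination (p ^ 14 * Dd ^ 2) * hB + (p ^ 12 * Dd ^ 2 + p ^ 14 * Dd ^ 2) * hC + (p ^ 5 * x₀ ^ 4 * x 0 * x 1 * x 2 ^ 2 + p ^ 5 * x₀ ^ 4 * x 0 * x 1 ^ 2 * x 2 + 2 * p ^ 5 * x₀ ^ 4 * x 0 * x 1 ^ 2 * x 2 ^ 2 + p ^ 5 * x₀ ^ 4 * x 0 * x 1 ^ 2 * x 2 ^ 3 + p ^ 5 * x₀ ^ 4 * x 0 * x 1 ^ 3 * x 2 ^ 2 + p ^ 5 * x₀ ^ 4 * x 0 ^ 2 * x 1 * x 2 + 2 * p ^ 5 * x₀ ^ 4 * x 0 ^ 2 * x 1 * x 2 ^ 2 + p ^ 5 * x₀ ^ 4 * x 0 ^ 2 * x 1 * x 2 ^ 3 + 2 * p ^ 5 * x₀ ^ 4 * x 0 ^ 2 * x 1 ^ 2 * x 2 + 4 * p ^ 5 * x₀ ^ 4 * x 0 ^ 2 * x 1 ^ 2 * x 2 ^ 2 + 2 * p ^ 5 * x₀ ^ 4 * x 0 ^ 2 * x 1 ^ 2 * x 2 ^ 3 + p ^ 5 * x₀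 ^ 4 * x 0 ^ 2 * x 1 ^ 3 * x 2 + 2 * p ^ 5 * x₀ ^ 4 * x 0 ^ 2 * x 1 ^ 3 * x 2 ^ 2 + p ^ 5 * x₀ ^ 4 * x 0 ^ 2 * x 1 ^ 3 * x 2 ^ 3 + p ^ 5 * x₀ ^ 4 * x 0 ^ 3 * x 1 * x 2 ^ 2 + p ^ 5 * x₀ ^ 4 * x 0 ^ 3 * x 1 ^ 2 * x 2 + 2 * p ^ 5 * x₀ ^ 4 * x 0 ^ 3 * x 1 ^ 2 * x 2 ^ 2 + p ^ 5 * x₀ ^ 4 * x 0 ^ 3 * x 1 ^ 2 * x 2 ^ 3 + p ^ 5 * x₀ ^ 4 * x 0 ^ 3 * x 1 ^ 3 * x 2 ^ 2 + p ^ 11 * x₀ ^ 2 * x 2 * Dd + p ^ 11 * x₀ ^ 2 * x 1 * Dd + 2 * p ^ 11 * x₀ ^ 2 * x 1 * x 2 * Dd + p ^ 11 * x₀ ^ 2 * x 1 * x 2 ^ 2 * Dd + p ^ 11 * x₀ ^ 2 * x 1 ^ 2 * x 2 * Dd + p ^ 11 * x₀ ^ 2 * x 0 * Dd + 2 * p ^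 11 * x₀ ^ 2 * x 0 * x 2 * Dd + p ^ 11 * x₀ ^ 2 * x 0 * x 2 ^ 2 * Dd + 2 * p ^ 11 * x₀ ^ 2 * x 0 * x 1 * Dd + 4 * p ^ 11 * x₀ ^ 2 * x 0 * x 1 * x 2 * Dd + 2 * p ^ 11 * x₀ ^ 2 * x 0 * x 1 * x 2 ^ 2 * Dd + p ^ 11 * x₀ ^ 2 * x 0 * x 1 ^ 2 * Dd + 2 * p ^ 11 * x₀ ^ 2 * x 0 * x 1 ^ 2 * x 2 * Dd + p ^ 11 * x₀ ^ 2 * x 0 * x 1 ^ 2 * x 2 ^ 2 * Dd + p ^ 11 * x₀ ^ 2 * x 0 ^ 2 * x 2 * Dd + p ^ 11 * x₀ ^ 2 * x 0 ^ 2 * x 1 * Dd + 2 * p ^ 11 * x₀ ^ 2 * x 0 ^ 2 * x 1 * x 2 * Dd + p ^ 11 * x₀ ^ 2 * x 0 ^ 2 * x 1 * x 2 ^ 2 * Dd + p ^ 11 * x₀ ^ 2 * x 0 ^ 2 * x 1 ^ 2 * x 2 * Dd + p ^ 12 * Dd ^ 2 + 2 * p ^ 14 * Dd ^ 2 + p ^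 16 * Dd ^ 2) * hD
  exact mul_left_cancel₀ (pow_ne_zero 5 p_ne) h

set_option maxHeartbeats 4000000 in
lemma hco7 : p ^ 18 * Dd ^ 3 * A = x₀ ^ 7 * x 0 ^ 3 * x 1 ^ 3 * x 2 ^ 3 + x₀ ^ 7 * x 0 ^ 3 * x 1 ^ 3 * x 2 ^ 4 + x₀ ^ 7 * x 0 ^ 3 * x 1 ^ 4 * x 2 ^ 3 + x₀ ^ 7 * x 0 ^ 3 * x 1 ^ 4 * x 2 ^ 4 + x₀ ^ 7 * x 0 ^ 4 * x 1 ^ 3 * x 2 ^ 3 + x₀ ^ 7 * x 0 ^ 4 * x 1 ^ 3 * x 2 ^ 4 + x₀ ^ 7 * x 0 ^ 4 * x 1 ^ 4 * x 2 ^ 3 + x₀ ^ 7 * x 0 ^ 4 * x 1 ^ 4 * x 2 ^ 4 := by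
  linear_combination (p ^ 18 * Dd ^ 3) * hA + (x₀ ^ 5 * x 0 ^ 2 * x 1 ^ 2 * x 2 ^ 2 + x₀ ^ 5 * x 0 ^ 2 * x 1 ^ 2 * x 2 ^ 3 + x₀ ^ 5 * x 0 ^ 2 * x 1 ^ 3 * x 2 ^ 2 + x₀ ^ 5 * x 0 ^ 2 * x 1 ^ 3 * x 2 ^ 3 + x₀ ^ 5 * x 0 ^ 3 * x 1 ^ 2 * x 2 ^ 2 + x₀ ^ 5 * x 0 ^ 3 * x 1 ^ 2 * x 2 ^ 3 + x₀ ^ 5 * x 0 ^ 3 * x 1 ^ 3 * x 2 ^ 2 + x₀ ^ 5 * x 0 ^ 3 * x 1 ^ 3 * x 2 ^ 3 + p ^ 6 * x₀ ^ 3 * x 0 * x 1 * x 2 * Dd + p ^ 6 * x₀ ^ 3 * x 0 * x 1 * x 2 ^ 2 * Dd + p ^ 6 * x₀ ^ 3 * x 0 * x 1 ^ 2 * x 2 * Dd + p ^ 6 * x₀ ^ 3 * x 0 * x 1 ^ 2 * x 2 ^ 2 * Dd + p ^ 6 * x₀ ^ 3 * x 0 ^ 2 * x 1 * x 2 * Dd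 + p ^ 6 * x₀ ^ 3 * x 0 ^ 2 * x 1 * x 2 ^ 2 * Dd + p ^ 6 * x₀ ^ 3 * x 0 ^ 2 * x 1 ^ 2 * x 2 * Dd + p ^ 6 * x₀ ^ 3 * x 0 ^ 2 * x 1 ^ 2 * x 2 ^ 2 * Dd + p ^ 12 * x₀ * Dd ^ 2 + p ^ 12 * x₀ * x 2 * Dd ^ 2 + p ^ 12 * x₀ * x 1 * Dd ^ 2 + p ^ 12 * x₀ * x 1 * x 2 * Dd ^ 2 + p ^ 12 * x₀ * x 0 * Dd ^ 2 + p ^ 12 * x₀ * x 0 * x 2 * Dd ^ 2 + p ^ 12 * x₀ * x 0 * x 1 * Dd ^ 2 + p ^ 12 * x₀ * x 0 * x 1 * x 2 * Dd ^ 2) * hD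

set_option maxHeartbeats 4000000 in
lemma hco8 : p ^ 24 * Dd ^ 4 = x₀ ^ 8 * x 0 ^ 4 * x 1 ^ 4 * x 2 ^ 4 := by
  linear_combination (x₀ ^ 6 * x 0 ^ 3 * x 1 ^ 3 * x 2 ^ 3 + p ^ 6 * x₀ ^ 4 * x 0 ^ 2 * x 1 ^ 2 * x 2 ^ 2 * Dd + p ^ 12 * x₀ ^ 2 * x 0 * x 1 * x 2 * Dd ^ 2 + p ^ 18 * Dd ^ 3) * hD

set_option maxHeartbeats 4000000 in
open Polynomial in
/-- the spherical-map form of the denominator `F(X)` of Shimura's conjecture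
for `Sp₃`: `Q(X) = Ω(F(X))` as polynomials in `F₀[X]`. -/
theorem Q_eq_Omega_F :
    ((1 - C x₀ * X) * (1 - C (x₀ * x 0) * X) * (1 - C (x₀ * x 1) * X)
      * (1 - C (x₀ * x 2) * X) * (1 - C (x₀ * x 0 * x 1) * X)
      * (1 - C (x₀ * x 0 * x 2) * X) * (1 - C (x₀ * x 1 * x 2) * X)
      * (1 - C (x₀ * x 0 * x 1 * x 2) * X) : F₀[X])
    = 1 - C A * X
      + C (p * (B + (p ^ 2 + 1) * Cc + (p ^ 2 + 1) ^ 2 * Dd)) * X ^ 2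
      - C (p ^ 3 * A * (Cc + Dd)) * X ^ 3
      + C (p ^ 6 * (-(2 * p * B * Dd) + Cc ^ 2 - 2 * (p - 1) * Cc * Dd
          - (p ^ 2 + 2 * p - 1) * (p ^ 4 + p ^ 2 + 1) * Dd ^ 2 + A ^ 2 * Dd)) * X ^ 4
      - C (p ^ 9 * A * Dd * (Cc + Dd)) * X ^ 5
      + C (p ^ 13 * Dd ^ 2 * (B + (p ^ 2 + 1) * Cc + (p ^ 2 + 1) ^ 2 * Dd)) * X ^ 6
      - C (p ^ 18 * Dd ^ 3 * A) * X ^ 7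
      + C (p ^ 24 * Dd ^ 4) * X ^ 8 := by
  rw [hco2, hco3, hco4, hco5, hco6, hco7, hco8, hco1]
  simp only [map_add, map_mul, map_pow, map_ofNat, map_one]
  ring
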